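/- For partitions λ = (λ₁,…,λ_m) and μ = (μ₁,…,μ_n) with Durfee sizes u = u_λ and v = u_μ, the exchange-number satisfies N(−λ, μ) = u·v + N(−λ_m,…,−λ_{u+1}, μ₁−u,…,μ_v−u) + N(−λ_u+v,…,−λ₁+v, μ_{v+1},…,μ_n). -/

import Mathlib

/-!  STATEMENT 16 (decomposition step of Lemma 3.2).  For partitions λ (m parts)
and μ (n parts) with Durfee sizes `u = u_λ`, `v = u_μ`,
`N(−λ, μ) = u·v + N(−λ_m,…,−λ_{u+1}, μ₁−u,…,μ_v−u)
          + N(−λ_u+v,…,−λ₁+v, μ_{v+1},…,μ_n)`,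
where `−λ = (−λ_m,…,−λ₁)`. -/

/-- The exchange number `N(δ)` of a weight: the number of pairs `i < j` with
`δ i - i < δ j - j` (the length of the permutation sorting `δ` into a
non-increasing weight under the exchange action `σᵢ·δ = (…, δ_{i+1}−1, δ_i+1, …)`). -/
def exchNum {n : ℕ} (δ : Fin n → ℤ) : ℕ :=
  (Finset.univ.filter (fun p : Fin n × Fin n =>
    p.1 < p.2 ∧ δ p.1 - (p.1 : ℤ) < δ p.2 - (p.2 : ℤ))).card

/-- `N(δ) ≠ -∞`: some permutation makes `δ` non-increasing under the exchange
action; equivalently the shifted sequence `i ↦ δ i - i` is injective. -/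
def Sortable {n : ℕ} (δ : Fin n → ℤ) : Prop :=
  Function.Injective (fun i : Fin n => δ i - (i : ℤ))

/-- The Durfee square size of a partition `λ` (a non-increasing sequence of
naturals): the number of indices `i` (0-indexed) with `λ_i ≥ i+1`, i.e. the
largest `u` with `λ_u ≥ u` (1-indexed). -/
def durfee {n : ℕ} (lam : Fin n → ℕ) : ℕ :=
  (Finset.univ.filter (fun i : Fin n => (i : ℕ) + 1 ≤ lam i)).card

/-- `|λ⁺|`: the number of boxes to the right of the Durfee square,
`∑_{i < u_λ} (λ_i − u_λ)`. -/
def plusSum {n : ℕ} (lam : Fin n → ℕ) : ℕ :=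
  ∑ i ∈ Finset.univ.filter (fun i : Fin n => (i : ℕ) + 1 ≤ lam i), (lam i - durfee lam)

/-- Extension of a finite sequence by zeros. -/
def extSeq {m : ℕ} (lam : Fin m → ℕ) : ℕ → ℕ :=
  fun i => if h : i < m then lam ⟨i, h⟩ else 0

/-! Since both blocks of `(−λ, μ)` are non-increasing, only pairs straddling the two blocks are
exchanges, and after reversing the `λ`-block the pair `(i, j)` (0-indexed) is one iff
`i + j + 2 ≤ λ_i + μ_j`. By the Durfee property this holds for every `i < u, j < v` and for no
`i ≥ u, j ≥ v`; the two remaining rectangles are the cross pairs of the two smaller weights. -/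

open Finset

theorem exchNum_eq_sum {n : ℕ} (δ : Fin n → ℤ) :
    exchNum δ = ∑ i, ∑ j, if i < j ∧ δ i - (i : ℤ) < δ j - (j : ℤ) then 1 else 0 := by
  rw [exchNum, card_filter, Fintype.sum_prod_type]

theorem exchNum_append {p q : ℕ} (f : Fin p → ℤ) (g : Fin q → ℤ) :
    exchNum (Fin.append f g) = exchNum f + exchNum g +
      ∑ i, ∑ j, if f i - (i : ℤ) < g j - (p + j : ℤ) then 1 else 0 := by
  simp only [exchNum_eq_sum, Fin.sum_univ_add, Fin.append_left, Fin.append_right]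
  have hLR (i : Fin p) (j : Fin q) : (i : ℕ) < p + j := by omega
  have hRL (i : Fin q) (j : Fin p) : ¬ p + (i : ℕ) < j := by omega
  simp only [Fin.lt_def, Fin.val_castAdd, Fin.val_natAdd, hLR, hRL, true_and, false_and,
    if_false, sum_const_zero, zero_add, add_lt_add_iff_left, Nat.cast_add,
    sub_add_eq_sub_sub, sum_add_distrib]
  simp only [sub_right_comm _ (p : ℤ), sub_lt_sub_iff_right]
  ac_rfl

theorem exchNum_eq_zero_of_antitone {n : ℕ} {δ : Fin n → ℤ} (hδ : Antitone δ) :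
    exchNum δ = 0 := by
  rw [exchNum, card_eq_zero, filter_eq_empty_iff]
  rintro ⟨i, j⟩ - ⟨hij, hlt⟩
  have := hδ hij.le
  have : (i : ℤ) < j := by exact_mod_cast hij
  omega

def crossCount (a b : ℕ → ℤ) (p q : ℕ) : ℕ :=
  ∑ i ∈ range p, ∑ j ∈ range q, if (i + j + 2 : ℤ) ≤ a i + b j then 1 else 0

theorem exchNum_append_eq_crossCount {p q : ℕ} {f : Fin p → ℤ} {g : Fin q → ℤ} {a b : ℕ → ℤ}
    (ha : Antitone a) (hb : Antitone b) (hf : ∀ i, f i = -a (p - 1 - i)) (hg : ∀ j, g j = b j) :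
    exchNum (Fin.append f g) = crossCount a b p q := by
  obtain rfl : f = _ := funext hf
  obtain rfl : g = _ := funext hg
  rw [exchNum_append, exchNum_eq_zero_of_antitone fun i j h => neg_le_neg (ha (by omega)),
    exchNum_eq_zero_of_antitone fun i j h => hb h, zero_add, zero_add, crossCount,
    ← sum_range_reflect, ← Fin.sum_univ_eq_sum_range]
  refine sum_congr rfl fun i _ => ?_
  rw [← Fin.sum_univ_eq_sum_range]
  refine sum_congr rfl fun j _ => if_congr ?_ rfl rfl
  omega

theorem crossCount_add_add (a b : ℕ → ℤ) {u v : ℕ} (m n : ℕ)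
    (hbox : ∀ i < u, ∀ j < v, (i + j + 2 : ℤ) ≤ a i + b j)
    (hout : ∀ i, u ≤ i → ∀ j, v ≤ j → a i + b j < i + j + 2) :
    crossCount a b (u + m) (v + n) =
      u * v + crossCount (fun i => a (u + i)) (fun j => b j - u) m v +
        crossCount (fun i => a i - v) (fun j => b (v + j)) u n := by
  simp only [crossCount, sum_range_add, sum_add_distrib]
  have hbox_sum : ∑ i ∈ range u, ∑ j ∈ range v, (if (i + j + 2 : ℤ) ≤ a i + b j then 1 else 0) =
      u * v := by
    rw [sum_congr rfl fun i hi => sum_congr rfl fun j hj =>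
      if_pos (hbox i (mem_range.1 hi) j (mem_range.1 hj))]
    simp
  have hout_sum : ∑ i ∈ range m, ∑ j ∈ range n,
      (if ((u + i : ℕ) + (v + j : ℕ) + 2 : ℤ) ≤ a (u + i) + b (v + j) then 1 else 0) = 0 :=
    sum_eq_zero fun i _ => sum_eq_zero fun j _ =>
      if_neg (not_le.2 (hout _ (by omega) _ (by omega)))
  rw [hbox_sum, hout_sum, add_zero]
  congr 1
  · congr 1
    exact sum_congr rfl fun i _ => sum_congr rfl fun j _ => if_congr (by omega) rfl rfl
  · exact sum_congr rfl fun i _ => sum_congr rfl fun j _ => if_congr (by omega) rfl rfl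

theorem extSeq_of_lt {m : ℕ} (lam : Fin m → ℕ) {i : ℕ} (h : i < m) :
    extSeq lam i = lam ⟨i, h⟩ := dif_pos h

theorem antitone_extSeq {m : ℕ} {lam : Fin m → ℕ} (hlam : Antitone lam) :
    Antitone (extSeq lam) := by
  intro i j hij
  unfold extSeq
  split_ifs with hi hj hj
  exacts [hlam (Fin.mk_le_mk.2 hij), by omega, Nat.zero_le _, le_rfl]

theorem durfee_le {m : ℕ} (lam : Fin m → ℕ) : durfee lam ≤ m :=
  (card_filter_le _ _).trans (card_fin m).le

theorem lt_durfee_iff {m : ℕ} {lam : Fin m → ℕ} (hlam : Antitone lam) (i : ℕ) :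
    i < durfee lam ↔ i + 1 ≤ extSeq lam i := by
  by_cases hi : i < m
  · rw [extSeq_of_lt lam hi]
    exact Fin.lt_card_filter_univ_iff_apply_of_imp (j := ⟨i, hi⟩) _
      fun a b hba h => (Nat.succ_le_succ hba).trans (h.trans (hlam hba))
  · have := durfee_le lam
    simp only [extSeq, hi, dif_neg, not_false_eq_true]
    omega

theorem stmt_16_general {m n : ℕ} (lam : Fin m → ℕ) (mu : Fin n → ℕ)
    (hlam : Antitone lam) (hmu : Antitone mu)
    (δ : Fin (m + n) → ℤ)
    (hδ : δ = Fin.append (fun i : Fin m => -(extSeq lam (m - 1 - (i : ℕ)) : ℤ))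
      (fun j : Fin n => (mu j : ℤ))) :
    exchNum δ = durfee lam * durfee mu +
      exchNum (Fin.append
        (fun i : Fin (m - durfee lam) => -(extSeq lam (m - 1 - (i : ℕ)) : ℤ))
        (fun j : Fin (durfee mu) => (extSeq mu (j : ℕ) : ℤ) - (durfee lam : ℤ))) +
      exchNum (Fin.append
        (fun i : Fin (durfee lam) =>
          -(extSeq lam (durfee lam - 1 - (i : ℕ)) : ℤ) + (durfee mu : ℤ))
        (fun j : Fin (n - durfee mu) => (extSeq mu (durfee mu + (j : ℕ)) : ℤ))) := by
  have hΛ : Antitone fun i => (extSeq lam i : ℤ) :=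
    Nat.mono_cast.comp_antitone (antitone_extSeq hlam)
  have hM : Antitone fun j => (extSeq mu j : ℤ) :=
    Nat.mono_cast.comp_antitone (antitone_extSeq hmu)
  have hsplit := crossCount_add_add (fun i => (extSeq lam i : ℤ)) (fun j => (extSeq mu j : ℤ))
    (m - durfee lam) (n - durfee mu)
    (fun i hi j hj => by
      have := (lt_durfee_iff hlam i).1 hi
      have := (lt_durfee_iff hmu j).1 hj
      omega)
    (fun i hi j hj => by
      have := (lt_durfee_iff hlam i).not.1 hi.not_gt
      have := (lt_durfee_iff hmu j).not.1 hj.not_gt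
      omega)
  rw [Nat.add_sub_cancel' (durfee_le lam), Nat.add_sub_cancel' (durfee_le mu)] at hsplit
  subst hδ
  convert hsplit using 3
  · exact exchNum_append_eq_crossCount hΛ hM (fun _ => rfl)
      fun j => by simp [extSeq_of_lt mu j.isLt]
  · exact exchNum_append_eq_crossCount (fun i j h => hΛ (by omega))
      (fun i j h => sub_le_sub_right (hM h) _) (fun i => by congr 3; omega) fun _ => rfl
  · exact exchNum_append_eq_crossCount (fun i j h => sub_le_sub_right (hΛ h) _)
      (fun i j h => hM (by omega)) (fun i => by ring) fun _ => rfl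

theorem stmt_16 {m n : ℕ} (lam : Fin m → ℕ) (mu : Fin n → ℕ)
    (hlam : Antitone lam) (hmu : Antitone mu)
    (δ : Fin (m + n) → ℤ)
    (hδ : δ = Fin.append (fun i : Fin m => -(extSeq lam (m - 1 - (i : ℕ)) : ℤ))
      (fun j : Fin n => (mu j : ℤ)))
    (hsort : Sortable δ) :
    exchNum δ = durfee lam * durfee mu +
      exchNum (Fin.append
        (fun i : Fin (m - durfee lam) => -(extSeq lam (m - 1 - (i : ℕ)) : ℤ))
        (fun j : Fin (durfee mu) => (extSeq mu (j : ℕ) : ℤ) - (durfee lam : ℤ))) +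
      exchNum (Fin.append
        (fun i : Fin (durfee lam) =>
          -(extSeq lam (durfee lam - 1 - (i : ℕ)) : ℤ) + (durfee mu : ℤ))
        (fun j : Fin (n - durfee mu) => (extSeq mu (durfee mu + (j : ℕ)) : ℤ))) :=
  stmt_16_general lam mu hlam hmu δ hδ
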